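/- arXiv:2102.10277 — 2 statements merged into one kernel-verified Lean document; each statement's English description precedes it below -/
import Mathlib

section
/- Let σ, α, μ be real numbers with 0 < σ < 1, 0 < α < 1, σα ≤ μ ≤ σ, μ ≤ α, and α − μ ≤ 1 − σ. Then σ·h(μ/σ) + (1−σ)·h((α−μ)/(1−σ)) − h(α) ≤ −((μ − σα)²/2)·(1/α + 1/(1−α)), where h is the binary entropy function. -/
/-!
Write `x = μ/σ` and `y = (α - μ)/(1 - σ)`, so that `σ x + (1 - σ) y = α` and `x - α = (μ - σα)/σ`.
By concavity, `h` lies below its tangent line at `α`; comparing the two convex combinations, the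
first-order terms cancel. On `[α, x]` the second derivative `-(1/s + 1/(1 - s))` of `h` is at most
`-(1/x + 1/(1 - α))`, so the `x`-term alone loses a quadratic amount
`σ (1/x + 1/(1 - α)) (x - α)² / 2 = (μ - σα)² (1/μ + 1/(σ(1 - α))) / 2`, which is at least the
claimed bound because `μ ≤ α` and `σ ≤ 1`.
-/

open Real Set

theorem ConcaveOn.le_add_mul_sub_of_hasDerivAt {S : Set ℝ} {f : ℝ → ℝ} {x y f' : ℝ}
    (hf : ConcaveOn ℝ S f) (hx : x ∈ S) (hy : y ∈ S) (hf' : HasDerivAt f f' x) :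
    f y ≤ f x + f' * (y - x) := by
  rcases lt_trichotomy y x with hyx | rfl | hxy
  · have h := hf.le_slope_of_hasDerivAt hy hx hyx hf'
    rw [slope_def_field, le_div_iff₀ (sub_pos.2 hyx)] at h
    linarith
  · simp
  · have h := hf.slope_le_of_hasDerivAt hx hy hxy hf'
    rw [slope_def_field, div_le_iff₀ (sub_pos.2 hxy)] at h
    linarith

namespace Real

theorem binEntropy_le_tangent {q p : ℝ} (hq₀ : 0 < q) (hq₁ : q < 1) (hp : p ∈ Icc 0 1) :
    binEntropy p ≤ binEntropy q + (log (1 - q) - log q) * (p - q) :=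
  strictConcave_binEntropy.concaveOn.le_add_mul_sub_of_hasDerivAt ⟨hq₀.le, hq₁.le⟩ hp
    (hasDerivAt_binEntropy hq₀.ne' hq₁.ne)

theorem hasDerivAt_binEntropy_add_mul_sq (K : ℝ) {s : ℝ} (hs₀ : s ≠ 0) (hs₁ : s ≠ 1) :
    HasDerivAt (fun s ↦ binEntropy s + K * s ^ 2 / 2) (log (1 - s) - log s + K * s) s :=
  ((hasDerivAt_binEntropy hs₀ hs₁).add
    ((hasDerivAt_pow 2 s).const_mul K |>.div_const 2)).congr_deriv (by ring)

theorem concaveOn_binEntropy_add_mul_sq {q p K : ℝ} (hq : 0 < q) (hp : p ≤ 1)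
    (hK : K ≤ 1 / p + 1 / (1 - q)) :
    ConcaveOn ℝ (Icc q p) (fun s ↦ binEntropy s + K * s ^ 2 / 2) := by
  refine concaveOn_of_hasDerivWithinAt2_nonpos (convex_Icc q p) (by fun_prop)
    (f' := fun s ↦ log (1 - s) - log s + K * s) (f'' := fun s ↦ K - (1 / s + 1 / (1 - s)))
    (fun s hs ↦ ?_) (fun s hs ↦ ?_) (fun s hs ↦ ?_) <;>
  obtain ⟨hqs, hsp⟩ : q < s ∧ s < p := by rwa [interior_Icc] at hs
  · exact (hasDerivAt_binEntropy_add_mul_sq K (by linarith) (by linarith)).hasDerivWithinAt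
  · refine HasDerivAt.hasDerivWithinAt ?_
    refine ((((hasDerivAt_id s).const_sub 1).log (by simp; linarith)).sub
      ((hasDerivAt_id s).log (by simp; linarith))).add
        ((hasDerivAt_id s).const_mul K) |>.congr_deriv ?_
    simp only [id]
    ring
  · have hKs : 1 / p + 1 / (1 - q) ≤ 1 / s + 1 / (1 - s) := by
      gcongr <;> linarith
    linarith

theorem binEntropy_le_tangent_sub_sq {q p : ℝ} (hq₀ : 0 < q) (hq₁ : q < 1) (hqp : q ≤ p)
    (hp : p ≤ 1) :
    binEntropy p ≤ binEntropy q + (log (1 - q) - log q) * (p - q)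
      - (1 / p + 1 / (1 - q)) * (p - q) ^ 2 / 2 := by
  set K := 1 / p + 1 / (1 - q)
  have h := (concaveOn_binEntropy_add_mul_sq hq₀ hp le_rfl).le_add_mul_sub_of_hasDerivAt
    ⟨le_rfl, hqp⟩ ⟨hqp, le_rfl⟩ (hasDerivAt_binEntropy_add_mul_sq K hq₀.ne' hq₁.ne)
  have hsq : K * p ^ 2 / 2 - K * q ^ 2 / 2 - K * q * (p - q) = K * (p - q) ^ 2 / 2 := by ring
  linarith

end Real

/-- the second-order entropy estimate used in the proof of
upper bound (b). -/
theorem entropy_second_order_estimate (σ α μ : ℝ) (hσ0 : 0 < σ) (hσ1 : σ < 1)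
    (hα0 : 0 < α) (hα1 : α < 1) (hσα : σ * α ≤ μ) (hμσ : μ ≤ σ)
    (hμα : μ ≤ α) (hαμ : α - μ ≤ 1 - σ) :
    σ * Real.binEntropy (μ / σ) + (1 - σ) * Real.binEntropy ((α - μ) / (1 - σ)) -
      Real.binEntropy α
      ≤ -((μ - σ * α) ^ 2 / 2) * (1 / α + 1 / (1 - α)) := by
  have hσ1' : 0 < 1 - σ := by linarith
  set x := μ / σ
  set y := (α - μ) / (1 - σ)
  have hαx : α ≤ x := by rw [le_div_iff₀ hσ0]; linarith
  have hx1 : x ≤ 1 := div_le_one_of_le₀ hμσ hσ0.le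
  have hy : y ∈ Icc 0 1 := ⟨div_nonneg (by linarith) hσ1'.le, div_le_one_of_le₀ hαμ hσ1'.le⟩
  have hbalance : σ * (x - α) + (1 - σ) * (y - α) = 0 := by
    simp only [x, y]; field_simp; ring
  have hcurv : (μ - σ * α) ^ 2 * (1 / α + 1 / (1 - α))
      ≤ σ * (1 / x + 1 / (1 - α)) * (x - α) ^ 2 := calc
    _ ≤ (μ - σ * α) ^ 2 * (1 / μ + 1 / (σ * (1 - α))) := by
      have hμ0 : 0 < μ := (mul_pos hσ0 hα0).trans_le hσα
      gcongr
      exact mul_le_of_le_one_left (sub_nonneg.2 hα1.le) hσ1.le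
    _ = _ := by simp only [x]; field_simp
  calc _ = σ * (binEntropy x - binEntropy α) + (1 - σ) * (binEntropy y - binEntropy α) := by ring
    _ ≤ σ * ((log (1 - α) - log α) * (x - α) - (1 / x + 1 / (1 - α)) * (x - α) ^ 2 / 2)
        + (1 - σ) * ((log (1 - α) - log α) * (y - α)) := by
      gcongr σ * ?_ + (1 - σ) * ?_
      · linarith [binEntropy_le_tangent_sub_sq hα0 hα1 hαx hx1]
      · linarith [binEntropy_le_tangent hα0 hα1 hy]
    _ = -(σ * (1 / x + 1 / (1 - α)) * (x - α) ^ 2 / 2) := by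
      linear_combination (log (1 - α) - log α) * hbalance
    _ ≤ _ := by linarith
end

section
/- Let n = 15, a = 7, b = 8, t = 2, and define A = {A ∈ C([15],7) : |A ∩ [7]| ≥ 4 and |A ∩ [9]| ≥ 5} and B = {B ∈ C([15],8) : |B ∩ [7]| ≥ 5 or |B ∩ [9]| ≥ 6}. Then A and B are cross-2-intersecting and |A| · |B| > N̂_prod(15, 7, 8, 2). -/
open Finset

/-- The ground set `[n] = {1,…,n}`. -/
def gs (n : ℕ) : Finset ℕ := Finset.Icc 1 n

/-- `F` is an `m`-uniform family of subsets of `[n]`. -/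
def UniformOn (n m : ℕ) (F : Finset (Finset ℕ)) : Prop :=
  ∀ A ∈ F, A ⊆ gs n ∧ A.card = m

/-- `F` and `G` are cross-`t`-intersecting. -/
def CrossInt (t : ℕ) (F G : Finset (Finset ℕ)) : Prop :=
  ∀ A ∈ F, ∀ B ∈ G, t ≤ (A ∩ B).card

/-- The family `{A ∈ C([n],m) : |A ∩ [s]| ≥ u}` appearing in a Hirschorn pair. -/
def HirschF (n m s u : ℕ) : Finset (Finset ℕ) :=
  ((gs n).powersetCard m).filter (fun A => u ≤ (A ∩ gs s).card)

/-- The maximum of `|F| ⬝ |G|` over all Hirschorn pairs `(F, G)` with parameters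
`u, v, s ∈ [n]`, `u + v = s + t`. -/
noncomputable def NHatProd (n a b t : ℕ) : ℕ :=
  sSup {x : ℕ | ∃ u ∈ gs n, ∃ v ∈ gs n, ∃ s ∈ gs n, u + v = s + t ∧
    x = (HirschF n a s u).card * (HirschF n b s v).card}

/-!
A set meeting `[7]` in at least 4 points and a set meeting `[7]` in at least 5 points share at
least `4 + 5 - 7 = 2` points; likewise `5 + 6 - 9 = 2` for `[9]`. This gives the
cross-intersection. For the sizes, splitting a set along its traces on the chain
`[7] ⊆ [9] ⊆ [15]` turns every family involved into a sum of products of binomial coefficients: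
both families have 1905 members, whereas a Hirschorn pair has product at most 3608550, attained at
`(s, u, v) = (6, 4, 4)` and `(9, 5, 6)`, and `3608550 < 1905 ^ 2 = 3629025`.
-/

variable {α : Type*}

theorem card_filter_powersetCard_of_card (S : Finset α) (i : ℕ) (P : ℕ → Prop) [DecidablePred P] :
    #{X ∈ S.powersetCard i | P #X} = if P i then (#S).choose i else 0 := by
  split_ifs with h
  · rw [filter_true_of_mem fun X hX => (mem_powersetCard.1 hX).2 ▸ h, card_powersetCard]
  · rw [filter_false_of_mem fun X hX => (mem_powersetCard.1 hX).2 ▸ h, card_empty]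

variable [DecidableEq α]

theorem le_card_inter_of_le_card_traces {A B S : Finset α} {p q t : ℕ}
    (hA : p ≤ #(A ∩ S)) (hB : q ≤ #(B ∩ S)) (hS : #S + t ≤ p + q) : t ≤ #(A ∩ B) := by
  have hunion : #(A ∩ S ∪ B ∩ S) ≤ #S :=
    card_le_card (union_subset inter_subset_right inter_subset_right)
  have hinter : #(A ∩ S ∩ (B ∩ S)) ≤ #(A ∩ B) := card_le_card fun x => by simp +contextual
  have := card_union_add_card_inter (A ∩ S) (B ∩ S)
  omega

theorem card_filter_powersetCard_inter_eq {G S : Finset α} (hSG : S ⊆ G) {m i : ℕ} (hi : i ≤ m)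
    (P : Finset α → Prop) [DecidablePred P] :
    #{A ∈ G.powersetCard m | #(A ∩ S) = i ∧ P (A ∩ S)} =
      #{X ∈ S.powersetCard i | P X} * (#G - #S).choose (m - i) := by
  rw [← card_sdiff_of_subset hSG, ← card_powersetCard, ← card_product]
  have hsplit : ∀ {X Y : Finset α}, X ⊆ S → Y ⊆ G \ S → (X ∪ Y) ∩ S = X ∧ (X ∪ Y) \ S = Y := by
    grind
  apply card_nbij' (fun A => (A ∩ S, A \ S)) (fun p => p.1 ∪ p.2)
  · intro A hA
    simp only [mem_coe, mem_filter, mem_product, mem_powersetCard] at hA ⊢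
    have := card_inter_add_card_sdiff A S
    exact ⟨⟨⟨inter_subset_right, hA.2.1⟩, hA.2.2⟩, sdiff_subset_sdiff hA.1.1 le_rfl, by omega⟩
  · rintro ⟨X, Y⟩ hXY
    simp only [mem_coe, mem_filter, mem_product, mem_powersetCard] at hXY ⊢
    obtain ⟨⟨⟨hXS, hXi⟩, hP⟩, hYGS, hYm⟩ := hXY
    have hdisj : Disjoint X Y :=
      disjoint_of_subset_left hXS (disjoint_of_subset_right hYGS disjoint_sdiff)
    rw [(hsplit hXS hYGS).1, card_union_of_disjoint hdisj]
    exact ⟨⟨union_subset (hXS.trans hSG) (hYGS.trans sdiff_subset), by omega⟩, hXi, hP⟩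
  · intro A _
    exact sup_inf_sdiff A S
  · rintro ⟨X, Y⟩ hXY
    simp only [mem_coe, mem_filter, mem_product, mem_powersetCard] at hXY
    exact Prod.ext (hsplit hXY.1.1.1 hXY.2.1).1 (hsplit hXY.1.1.1 hXY.2.1).2

theorem card_filter_powersetCard_eq_sum {G S : Finset α} (hSG : S ⊆ G) (m : ℕ)
    (P : Finset α → Prop) [DecidablePred P] :
    #{A ∈ G.powersetCard m | P (A ∩ S)} =
      ∑ i ∈ range (m + 1), #{X ∈ S.powersetCard i | P X} * (#G - #S).choose (m - i) := by
  have hmaps : ∀ A ∈ {A ∈ G.powersetCard m | P (A ∩ S)}, #(A ∩ S) ∈ range (m + 1) :=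
    fun A hA => mem_range_succ_iff.2
      ((card_le_card inter_subset_left).trans (mem_powersetCard.1 (mem_filter.1 hA).1).2.le)
  rw [card_eq_sum_card_fiberwise hmaps]
  refine sum_congr rfl fun i hi => ?_
  rw [filter_filter, ← card_filter_powersetCard_inter_eq hSG (mem_range_succ_iff.1 hi)]
  simp only [and_comm]

theorem card_filter_powersetCard_of_nested_traces {G S R : Finset α} (hRS : R ⊆ S) (hSG : S ⊆ G)
    (m : ℕ) (Q : ℕ → ℕ → Prop) [∀ i k, Decidable (Q i k)] :
    #{A ∈ G.powersetCard m | Q #(A ∩ R) #(A ∩ S)} =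
      ∑ k ∈ range (m + 1), ∑ i ∈ range (k + 1),
        if Q i k then (#R).choose i * (#S - #R).choose (k - i) * (#G - #S).choose (m - k)
        else 0 := by
  have htrace : ∀ A : Finset α, A ∩ S ∩ R = A ∩ R := fun A => by
    rw [inter_assoc, inter_eq_right.2 hRS]
  have hfilter : {A ∈ G.powersetCard m | Q #(A ∩ R) #(A ∩ S)} =
      {A ∈ G.powersetCard m | Q #(A ∩ S ∩ R) #(A ∩ S)} := by
    simp only [htrace]
  rw [hfilter, card_filter_powersetCard_eq_sum hSG m fun X => Q #(X ∩ R) #X]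
  refine sum_congr rfl fun k _ => ?_
  have hcard :
      #{X ∈ S.powersetCard k | Q #(X ∩ R) #X} = #{X ∈ S.powersetCard k | Q #(X ∩ R) k} :=
    congrArg card (filter_congr fun X hX => by rw [(mem_powersetCard.1 hX).2])
  rw [hcard, card_filter_powersetCard_eq_sum hRS k fun Y => Q #Y k, sum_mul]
  refine sum_congr rfl fun i _ => ?_
  rw [card_filter_powersetCard_of_card R i (Q · k)]
  split_ifs <;> simp [mul_assoc]

theorem card_gs (n : ℕ) : #(gs n) = n := by simp [gs]

theorem gs_subset_gs {s n : ℕ} (h : s ≤ n) : gs s ⊆ gs n := Icc_subset_Icc le_rfl h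

theorem card_hirschF {n s : ℕ} (hs : s ≤ n) (m u : ℕ) :
    #(HirschF n m s u) =
      ∑ i ∈ range (m + 1), if u ≤ i then s.choose i * (n - s).choose (m - i) else 0 := by
  rw [HirschF, card_filter_powersetCard_eq_sum (gs_subset_gs hs) m (u ≤ #·)]
  simp only [card_filter_powersetCard_of_card, card_gs, ite_mul, zero_mul]

theorem hirschorn_products_le : ∀ s < 16, ∀ u < 16, ∀ v < 16, u + v = s + 2 →
    (∑ i ∈ range 8, if u ≤ i then s.choose i * (15 - s).choose (7 - i) else 0) *
      (∑ i ∈ range 9, if v ≤ i then s.choose i * (15 - s).choose (8 - i) else 0) ≤ 3608550 := by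
  decide

theorem nHatProd_le : NHatProd 15 7 8 2 ≤ 3608550 := by
  refine csSup_le' ?_
  rintro x ⟨u, hu, v, hv, s, hs, huv, hx⟩
  simp only [gs, mem_Icc] at hu hv hs
  rw [hx, card_hirschF hs.2, card_hirschF hs.2]
  exact hirschorn_products_le s (by omega) u (by omega) v (by omega) huv

theorem card_counterexample_left :
    #{A ∈ (gs 15).powersetCard 7 | 4 ≤ #(A ∩ gs 7) ∧ 5 ≤ #(A ∩ gs 9)} = 1905 := by
  rw [card_filter_powersetCard_of_nested_traces (gs_subset_gs (by norm_num))
    (gs_subset_gs (by norm_num)) 7 fun i k => 4 ≤ i ∧ 5 ≤ k]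
  simp only [card_gs]
  decide

theorem card_counterexample_right :
    #{B ∈ (gs 15).powersetCard 8 | 5 ≤ #(B ∩ gs 7) ∨ 6 ≤ #(B ∩ gs 9)} = 1905 := by
  rw [card_filter_powersetCard_of_nested_traces (gs_subset_gs (by norm_num))
    (gs_subset_gs (by norm_num)) 8 fun i k => 5 ≤ i ∨ 6 ≤ k]
  simp only [card_gs]
  decide

/-- a concrete counterexample to Hirschorn's conjecture for
`n = 15`, `a = 7`, `b = 8`, `t = 2`. -/
theorem concrete_counterexample :
    CrossInt 2
      (((gs 15).powersetCard 7).filter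
        (fun A => 4 ≤ (A ∩ gs 7).card ∧ 5 ≤ (A ∩ gs 9).card))
      (((gs 15).powersetCard 8).filter
        (fun B => 5 ≤ (B ∩ gs 7).card ∨ 6 ≤ (B ∩ gs 9).card)) ∧
    NHatProd 15 7 8 2 <
      (((gs 15).powersetCard 7).filter
        (fun A => 4 ≤ (A ∩ gs 7).card ∧ 5 ≤ (A ∩ gs 9).card)).card *
      (((gs 15).powersetCard 8).filter
        (fun B => 5 ≤ (B ∩ gs 7).card ∨ 6 ≤ (B ∩ gs 9).card)).card := by
  refine ⟨fun A hA B hB => ?_, ?_⟩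
  · simp only [mem_filter] at hA hB
    rcases hB.2 with hB7 | hB9
    · exact le_card_inter_of_le_card_traces hA.2.1 hB7 (by rw [card_gs])
    · exact le_card_inter_of_le_card_traces hA.2.2 hB9 (by rw [card_gs])
  · rw [card_counterexample_left, card_counterexample_right]
    exact nHatProd_le.trans_lt (by norm_num)
end
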